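/- Let X be a homogeneous contractive normed c₀-module, let x ∈ X_es and y ∈ X. If ‖xₙ‖ ≤ ‖yₙ‖ for all n ∈ ℕ, then ‖x‖ ≤ ‖y‖. -/

import Mathlib

open Filter MeasureTheory

noncomputable section

/-- The algebra `c₀` of complex sequences converging to zero, with pointwise
operations and the supremum norm. -/
abbrev czero : Type := ZeroAtInftyContinuousMap ℕ ℂ

/-- The `n`-th ort: the indicator sequence of `{n}`. -/
def ort (n : ℕ) : czero where
  toFun := fun m => if m = n then 1 else 0
  continuous_toFun := continuous_of_discreteTopology
  zero_at_infty' := by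
    rw [cocompact_eq_atTop]
    have h : (fun m : ℕ => if m = n then (1 : ℂ) else 0) =ᶠ[atTop] fun _ => (0 : ℂ) := by
      filter_upwards [eventually_gt_atTop n] with m hm
      simp [Nat.ne_of_gt hm]
    exact (tendsto_congr' h).mpr tendsto_const_nhds

/-- `P N = p⁰ + ⋯ + p^{N-1}`. -/
def PN (N : ℕ) : czero := ∑ n ∈ Finset.range N, ort n

/-- A (contractive) normed `c₀`-module structure on a complex normed space `X`. -/
structure C0Mod (X : Type) [NormedAddCommGroup X] [NormedSpace ℂ X] where
  smul : czero → X → X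
  add_smul : ∀ a b x, smul (a + b) x = smul a x + smul b x
  smul_add : ∀ a x y, smul a (x + y) = smul a x + smul a y
  mul_smul : ∀ a b x, smul (a * b) x = smul a (smul b x)
  csmul_left : ∀ (c : ℂ) a x, smul (c • a) x = c • smul a x
  csmul_right : ∀ (c : ℂ) a x, smul a (c • x) = c • smul a x
  norm_smul_le : ∀ a x, ‖smul a x‖ ≤ ‖a‖ * ‖x‖

namespace C0Mod

variable {X : Type} [NormedAddCommGroup X] [NormedSpace ℂ X] (M : C0Mod X)

/-- The action of `a ∈ c₀` as a continuous linear map. -/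
def lsmul (a : czero) : X →L[ℂ] X :=
  LinearMap.mkContinuous
    { toFun := M.smul a
      map_add' := M.smul_add a
      map_smul' := fun c x => M.csmul_right c a x }
    ‖a‖ (fun x => M.norm_smul_le a x)

@[simp] lemma lsmul_apply (a : czero) (x : X) : M.lsmul a x = M.smul a x := rfl

/-- The essential part `X_es` of `X`: the closure of the linear span of all
products `a • x`. -/
def essSet : Set X :=
  closure (Submodule.span ℂ {y : X | ∃ (a : czero) (x : X), y = M.smul a x} : Set X)

/-- A module is essential if it coincides with its essential part. -/
def Essential : Prop := M.essSet = Set.univ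

/-- The `n`-th coordinate submodule `Xₙ = {pⁿ • x : x ∈ X}`. -/
def coordSub (n : ℕ) : Submodule ℂ X := LinearMap.range ((M.lsmul (ort n)) : X →ₗ[ℂ] X)

lemma mem_coordSub (n : ℕ) (x : X) : M.smul (ort n) x ∈ M.coordSub n := ⟨x, rfl⟩

/-- A module is homogeneous if the norm of an element is determined by the norms
of its coordinates. -/
def Homogeneous : Prop :=
  ∀ x y : X, (∀ n : ℕ, ‖M.smul (ort n) x‖ = ‖M.smul (ort n) y‖) → ‖x‖ = ‖y‖

/-- The annihilator of `c₀` in `X`. -/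
def ann : Submodule ℂ X where
  carrier := {x : X | ∀ a : czero, M.smul a x = 0}
  add_mem' := by
    intro x y hx hy
    intro a
    rw [M.smul_add, hx a, hy a, add_zero]
  zero_mem' := by
    intro a
    have h := M.smul_add a 0 0
    simp only [add_zero] at h
    have := congrArg (fun z => z - M.smul a 0) h
    simpa using this.symm
  smul_mem' := by
    intro c x hx a
    rw [M.csmul_right, hx a, smul_zero]

end C0Mod

/-
On the essential part the truncations `P_N = p⁰ + ⋯ + p^{N-1}` form an approximate identity:
`P_N • (a • v) = (P_N a) • v → a • v` because `P_N a → a` in `c₀`, and this passes to the closed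
span since `‖P_N‖ ≤ 1`. For fixed `N`, the multiplier `b = ∑_{n<N} (‖xₙ‖ / ‖yₙ‖) pⁿ` has `‖b‖ ≤ 1`
and gives `b • y` the same coordinate norms as `P_N • x`, so homogeneity yields
`‖P_N • x‖ = ‖b • y‖ ≤ ‖y‖`; let `N → ∞`.
-/

open Topology

lemma ZeroAtInftyContinuousMap.norm_le_of_forall_norm_apply_le {α β : Type*} [TopologicalSpace α]
    [SeminormedAddCommGroup β] (f : ZeroAtInftyContinuousMap α β) {C : ℝ} (hC : 0 ≤ C)
    (hf : ∀ a, ‖f a‖ ≤ C) : ‖f‖ ≤ C :=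
  (BoundedContinuousFunction.norm_le hC).mpr hf

lemma ort_apply (n m : ℕ) : ort n m = if m = n then 1 else 0 := rfl

lemma sum_smul_ort_apply (s : Finset ℕ) (f : ℕ → ℂ) (m : ℕ) :
    (∑ n ∈ s, f n • ort n) m = if m ∈ s then f m else 0 := by
  change (AddMonoidHom.mk' (fun g : czero => g m) fun _ _ => rfl) (∑ n ∈ s, f n • ort n) = _
  simp [map_sum, ort_apply]

lemma PN_apply (N m : ℕ) : PN N m = if m < N then 1 else 0 := by
  simpa [PN] using sum_smul_ort_apply (Finset.range N) 1 m

lemma norm_PN_le_one (N : ℕ) : ‖PN N‖ ≤ 1 :=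
  (PN N).norm_le_of_forall_norm_apply_le zero_le_one fun m => by
    rw [PN_apply]; split_ifs <;> simp

lemma ort_mul (n : ℕ) (a : czero) : ort n * a = a n • ort n := by
  ext m
  by_cases hm : m = n <;> simp [ort_apply, hm]

lemma tendsto_PN_mul (a : czero) : Tendsto (fun N => PN N * a) atTop (𝓝 a) := by
  rw [ZeroAtInftyContinuousMap.tendsto_iff_tendstoUniformly, Metric.tendstoUniformly_iff]
  intro ε hε
  have ha : Tendsto a atTop (𝓝 0) := cocompact_eq_atTop (α := ℕ) ▸ a.zero_at_infty'
  obtain ⟨K, hK⟩ := eventually_atTop.mp (Metric.tendsto_nhds.mp ha ε hε)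
  filter_upwards [eventually_ge_atTop K] with N hN m
  by_cases hm : m < N
  · simpa [PN_apply, hm] using hε
  · simpa [PN_apply, hm, dist_comm] using hK m (by omega)

namespace C0Mod

variable {X : Type} [NormedAddCommGroup X] [NormedSpace ℂ X] (M : C0Mod X)

def lsmulFlip (x : X) : czero →L[ℂ] X :=
  LinearMap.mkContinuous
    { toFun := fun a => M.smul a x
      map_add' := fun a b => M.add_smul a b x
      map_smul' := fun c a => M.csmul_left c a x }
    ‖x‖ fun a => (M.norm_smul_le a x).trans_eq (mul_comm _ _)

lemma norm_ort_smul_smul (n : ℕ) (a : czero) (x : X) :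
    ‖M.smul (ort n) (M.smul a x)‖ = ‖a n‖ * ‖M.smul (ort n) x‖ := by
  rw [← M.mul_smul, ort_mul, M.csmul_left, norm_smul]

lemma tendsto_PN_smul_of_mem_essSet {x : X} (hx : x ∈ M.essSet) :
    Tendsto (fun N => M.smul (PN N) x) atTop (𝓝 x) := by
  have hequi : Equicontinuous fun N => M.smul (PN N) :=
    ((NormedSpace.equicontinuous_TFAE fun N => M.lsmul (PN N)).out 3 1).mp <|
      show ∃ C, ∀ N x, ‖M.smul (PN N) x‖ ≤ C * ‖x‖ from ⟨1, fun N x => (M.norm_smul_le _ x).trans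
        (mul_le_mul_of_nonneg_right (norm_PN_le_one N) (norm_nonneg x))⟩
  refine closure_minimal (fun z hz => ?_) (hequi.isClosed_setOfPred_tendsto continuous_id) hx
  change Tendsto (fun N => M.smul (PN N) z) atTop (𝓝 z)
  induction hz using Submodule.span_induction with
  | mem w hw =>
    obtain ⟨a, v, rfl⟩ := hw
    simp only [← M.mul_smul]
    exact ((M.lsmulFlip v).continuous.tendsto a).comp (tendsto_PN_mul a)
  | zero =>
    simp only [← M.lsmul_apply, map_zero]
    exact tendsto_const_nhds
  | add u v _ _ hu hv => simpa only [M.smul_add] using hu.add hv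
  | smul c u _ hu => simpa only [M.csmul_right] using hu.const_smul c

variable {M} in
theorem Homogeneous.norm_PN_smul_le (hhom : M.Homogeneous) {x y : X}
    (h : ∀ n, ‖M.smul (ort n) x‖ ≤ ‖M.smul (ort n) y‖) (N : ℕ) :
    ‖M.smul (PN N) x‖ ≤ ‖y‖ := by
  set t : ℕ → ℝ := fun n => ‖M.smul (ort n) x‖ / ‖M.smul (ort n) y‖
  have ht_mul (n : ℕ) : t n * ‖M.smul (ort n) y‖ = ‖M.smul (ort n) x‖ := by
    rcases eq_or_ne ‖M.smul (ort n) y‖ 0 with hy | hy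
    · simp [hy, le_antisymm (hy ▸ h n) (norm_nonneg _)]
    · exact div_mul_cancel₀ _ hy
  have ht_norm (n : ℕ) : ‖(t n : ℂ)‖ = t n := Complex.norm_of_nonneg (by positivity)
  set b : czero := ∑ n ∈ Finset.range N, (t n : ℂ) • ort n
  have hb : ‖b‖ ≤ 1 := b.norm_le_of_forall_norm_apply_le zero_le_one fun m => by
    rw [sum_smul_ort_apply]
    split_ifs
    · exact (ht_norm m).trans_le (div_le_one_of_le₀ (h m) (norm_nonneg _))
    · simp
  have hcoord : ‖M.smul (PN N) x‖ = ‖M.smul b y‖ := hhom _ _ fun n => by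
    rw [M.norm_ort_smul_smul, M.norm_ort_smul_smul, PN_apply, sum_smul_ort_apply]
    by_cases hn : n < N
    · simp only [hn, Finset.mem_range, if_true, norm_one, one_mul, ht_norm, ht_mul]
    · simp [hn]
  calc ‖M.smul (PN N) x‖ = ‖M.smul b y‖ := hcoord
    _ ≤ ‖b‖ * ‖y‖ := M.norm_smul_le b y
    _ ≤ ‖y‖ := mul_le_of_le_one_left (norm_nonneg y) hb

end C0Mod

/-- Let `X` be a homogeneous contractive normed `c₀`-module,
`x ∈ X_es` and `y ∈ X`. If `‖xₙ‖ ≤ ‖yₙ‖` for every `n`, then `‖x‖ ≤ ‖y‖`. -/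
theorem homogeneous_norm_le
    {X : Type} [NormedAddCommGroup X] [NormedSpace ℂ X] (M : C0Mod X)
    (hhom : M.Homogeneous) (x y : X) (hx : x ∈ M.essSet)
    (h : ∀ n : ℕ, ‖M.smul (ort n) x‖ ≤ ‖M.smul (ort n) y‖) :
    ‖x‖ ≤ ‖y‖ :=
  le_of_tendsto (M.tendsto_PN_smul_of_mem_essSet hx).norm
    (Eventually.of_forall (hhom.norm_PN_smul_le h))
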